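/- Let P be a real n×q matrix with rows p⃗_1,...,p⃗_n satisfying p⃗_i ≠ p⃗_k for i ≠ k, let ζ⃗: X → ℝ^q with ζ_j = dμ^j/dμ continuous, and assume μ(x : λ⃗·ζ⃗(x) = 0) = 0 for every nonzero λ⃗ ∈ ℝ^q. Define A_i⁰(P) = { x ∈ X : p⃗_i·ζ⃗(x) = max(0, max_k p⃗_k·ζ⃗(x)) }. Then A_1⁰(P),...,A_n⁰(P) are pairwise μ-essentially disjoint, i.e., μ(A_i⁰(P) ∩ A_k⁰(P)) = 0 for i ≠ k. -/

import Mathlib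

open MeasureTheory Matrix

theorem measure_setOf_dotProduct_eq_eq_zero {X ι : Type*} [MeasurableSpace X] [Fintype ι]
    (μ : Measure X) (ζ : X → ι → ℝ)
    (hnull : ∀ lam : ι → ℝ, lam ≠ 0 → μ {x | lam ⬝ᵥ ζ x = 0} = 0)
    {p p' : ι → ℝ} (hne : p ≠ p') :
    μ {x | p ⬝ᵥ ζ x = p' ⬝ᵥ ζ x} = 0 :=
  measure_mono_null (fun x hx => by simpa [sub_dotProduct, sub_eq_zero] using hx)
    (hnull _ (sub_ne_zero.2 hne))

theorem stmt6_general {X : Type*} [MeasurableSpace X] (q n : ℕ) [NeZero n]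
    (μs : Fin q → Measure X) (ζ : X → Fin q → ℝ)
    (hii : ∀ lam : Fin q → ℝ, lam ≠ 0 →
      (∑ j', μs j') {x | ∑ j, lam j * ζ x j = 0} = 0)
    (P : Fin n → Fin q → ℝ) (hP : ∀ i k, i ≠ k → P i ≠ P k)
    (A0 : Fin n → Set X)
    (hA0 : ∀ i, A0 i = {x | ∑ j, P i j * ζ x j =
      max (Finset.univ.sup' Finset.univ_nonempty fun k => ∑ j, P k j * ζ x j) 0}) :
    ∀ i k, i ≠ k → (∑ j', μs j') (A0 i ∩ A0 k) = 0 := by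
  intro i k hik
  refine measure_mono_null ?_ (measure_setOf_dotProduct_eq_eq_zero _ ζ hii (hP i k hik))
  rintro x ⟨hxi, hxk⟩
  rw [hA0] at hxi hxk
  exact hxi.trans hxk.symm

theorem stmt6 {X : Type*} [MetricSpace X] [CompactSpace X]
    [MeasurableSpace X] [BorelSpace X] (q n : ℕ) [NeZero n]
    (μs : Fin q → Measure X) [∀ j, IsFiniteMeasure (μs j)] [∀ j, NullSingletonClass (μs j)]
    (ζ : X → Fin q → ℝ)
    (hζcont : ∀ j, Continuous fun x => ζ x j)
    (hζ : ∀ j, μs j = (∑ j', μs j').withDensity fun x => ENNReal.ofReal (ζ x j))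
    (hii : ∀ lam : Fin q → ℝ, lam ≠ 0 →
      (∑ j', μs j') {x | ∑ j, lam j * ζ x j = 0} = 0)
    (P : Fin n → Fin q → ℝ) (hP : ∀ i k, i ≠ k → P i ≠ P k)
    (A0 : Fin n → Set X)
    (hA0 : ∀ i, A0 i = {x | ∑ j, P i j * ζ x j =
      max (Finset.univ.sup' Finset.univ_nonempty fun k => ∑ j, P k j * ζ x j) 0}) :
    ∀ i k, i ≠ k → (∑ j', μs j') (A0 i ∩ A0 k) = 0 :=
  stmt6_general q n μs ζ hii P hP A0 hA0
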